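/- arXiv:1607.01345 — 3 statements merged into one kernel-verified Lean document; each statement's English description precedes it below -/
import Mathlib

section
/- Data processing inequality for correlation ratio and maximal correlation: if X → Y → Z is a Markov chain (X and Z are conditionally independent given Y), then ρ(X,Z) ≤ θ(X,Y)·θ(Z,Y), for real-valued square-integrable X, Z with positive variances. -/
open MeasureTheory ProbabilityTheory

noncomputable def cov {Ω : Type*} [MeasurableSpace Ω] (μ : Measure Ω) (X Y : Ω → ℝ) : ℝ :=
  ∫ ω, (X ω - ∫ x, X x ∂μ) * (Y ω - ∫ x, Y x ∂μ) ∂μ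

noncomputable def corr {Ω : Type*} [MeasurableSpace Ω] (μ : Measure Ω) (X Y : Ω → ℝ) : ℝ :=
  cov μ X Y / (Real.sqrt (variance X μ) * Real.sqrt (variance Y μ))

/-- Correlation ratio `θ(X, Y) = √(var(E[X|Y]) / var(X))`. -/
noncomputable def corrRatio {Ω β : Type*} [m : MeasurableSpace Ω] [mβ : MeasurableSpace β]
    (μ : Measure Ω) (X : Ω → ℝ) (Y : Ω → β) : ℝ :=
  Real.sqrt (variance (μ[X | MeasurableSpace.comap Y mβ]) μ / variance X μ)

/-! Conditional independence given `Y` factorises `E[XZ | Y] = E[X | Y] E[Z | Y]`: under the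
conditional expectation kernel, `X` and `Z` are independent for almost every fibre. Hence `X` and
`Z` have the same covariance as `E[X | Y]` and `E[Z | Y]`, and Cauchy–Schwarz bounds that covariance
by `√var E[X | Y] · √var E[Z | Y]`. Dividing by `√var X · √var Z` gives the inequality. -/

open Set

namespace ProbabilityTheory

lemma covariance_le_sqrt_variance_mul_sqrt_variance {Ω : Type*} [MeasurableSpace Ω]
    {μ : Measure Ω} [IsFiniteMeasure μ] {X Y : Ω → ℝ} (hX : MemLp X 2 μ) (hY : MemLp Y 2 μ) :
    cov[X, Y; μ] ≤ √Var[X; μ] * √Var[Y; μ] := by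
  have hquad : ∀ t : ℝ, 0 ≤ Var[Y; μ] * (t * t) + 2 * cov[X, Y; μ] * t + Var[X; μ] := by
    intro t
    have h := variance_nonneg (X + t • Y) μ
    rw [variance_add hX (hY.const_smul t), variance_smul, covariance_smul_right] at h
    linarith
  have hdiscrim := discrim_le_zero hquad
  rw [discrim] at hdiscrim
  calc cov[X, Y; μ] ≤ |cov[X, Y; μ]| := le_abs_self _
    _ ≤ √(Var[X; μ] * Var[Y; μ]) := Real.abs_le_sqrt (by nlinarith)
    _ = √Var[X; μ] * √Var[Y; μ] := Real.sqrt_mul (variance_nonneg X μ) _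

lemma Kernel.IndepFun.ae_indepFun {α Ω : Type*} {mα : MeasurableSpace α}
    {mΩ : MeasurableSpace Ω} {κ : Kernel α Ω} [IsMarkovKernel κ] {ν : Measure α} {f g : Ω → ℝ}
    (hf : Measurable f) (hg : Measurable g) (h : Kernel.IndepFun f g κ ν) :
    ∀ᵐ a ∂ν, ProbabilityTheory.IndepFun f g (κ a) := by
  -- The rational half-lines form a countable generating π-system, so the countably many
  -- product identities on it hold simultaneously for `ν`-a.e. `a`.
  have hIic : ∀ᵐ a ∂ν, ∀ q r : ℚ, κ a (f ⁻¹' Iic (q : ℝ) ∩ g ⁻¹' Iic (r : ℝ))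
      = κ a (f ⁻¹' Iic (q : ℝ)) * κ a (g ⁻¹' Iic (r : ℝ)) := by
    simp only [ae_all_iff]
    exact fun q r => indepFun_iff_measure_inter_preimage_eq_mul.mp h _ _
      measurableSet_Iic measurableSet_Iic
  have hgen : ∀ u : Ω → ℝ, MeasurableSpace.comap u inferInstance
      = MeasurableSpace.generateFrom ((u ⁻¹' ·) '' ⋃ q : ℚ, {Iic (q : ℝ)}) := fun u => by
    rw [← MeasurableSpace.comap_generateFrom, ← Real.borel_eq_generateFrom_Iic_rat,
      BorelSpace.measurable_eq (α := ℝ)]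
  filter_upwards [hIic] with a ha
  rw [ProbabilityTheory.IndepFun_iff_Indep]
  refine ProbabilityTheory.IndepSets.indep hf.comap_le hg.comap_le
    (Real.isPiSystem_Iic_rat.comap f) (Real.isPiSystem_Iic_rat.comap g) (hgen f) (hgen g) ?_
  rw [ProbabilityTheory.IndepSets_iff]
  rintro _ _ ⟨_, hs, rfl⟩ ⟨_, ht, rfl⟩
  simp only [mem_iUnion, mem_singleton_iff] at hs ht
  obtain ⟨q, rfl⟩ := hs
  obtain ⟨r, rfl⟩ := ht
  exact ha q r

section CondIndep

variable {Ω : Type*} {m mΩ : MeasurableSpace Ω} [StandardBorelSpace Ω] {hm : m ≤ mΩ}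
  {μ : Measure Ω} [IsFiniteMeasure μ]

lemma ae_ae_eq_condExpKernel {β : Type*} {f g : Ω → β} (hfg : f =ᵐ[μ] g) :
    ∀ᵐ ω ∂μ.trim hm, f =ᵐ[condExpKernel μ m ω] g :=
  Measure.ae_ae_of_ae_comp (by rwa [condExpKernel_comp_trim hm])

lemma CondIndepFun.condExp_mul_ae_eq {X Z : Ω → ℝ} (h : CondIndepFun m hm X Z μ)
    (hX : Integrable X μ) (hZ : Integrable Z μ) (hXZ : Integrable (X * Z) μ) :
    μ[X * Z | m] =ᵐ[μ] μ[X | m] * μ[Z | m] := by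
  set X₀ := hX.1.mk X
  set Z₀ := hZ.1.mk Z
  have hXX₀ := ae_ae_eq_condExpKernel (hm := hm) hX.1.ae_eq_mk
  have hZZ₀ := ae_ae_eq_condExpKernel (hm := hm) hZ.1.ae_eq_mk
  have h₀ : CondIndepFun m hm X₀ Z₀ μ := Kernel.IndepFun.congr' h hXX₀ hZZ₀
  filter_upwards [condExp_ae_eq_integral_condExpKernel hm hXZ,
    condExp_ae_eq_integral_condExpKernel hm hX, condExp_ae_eq_integral_condExpKernel hm hZ,
    ae_of_ae_trim hm (h₀.ae_indepFun hX.1.stronglyMeasurable_mk.measurable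
      hZ.1.stronglyMeasurable_mk.measurable),
    ae_of_ae_trim hm hXX₀, ae_of_ae_trim hm hZZ₀] with ω hXZω hXω hZω hind hXω₀ hZω₀
  rw [Pi.mul_apply, hXZω, hXω, hZω, integral_congr_ae (hXω₀.mul hZω₀),
    integral_congr_ae hXω₀, integral_congr_ae hZω₀]
  exact hind.integral_mul_eq_mul_integral hX.1.stronglyMeasurable_mk.aestronglyMeasurable
    hZ.1.stronglyMeasurable_mk.aestronglyMeasurable

lemma CondIndepFun.covariance_eq_covariance_condExp [IsProbabilityMeasure μ] {X Z : Ω → ℝ}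
    (h : CondIndepFun m hm X Z μ) (hX : MemLp X 2 μ) (hZ : MemLp Z 2 μ) :
    cov[X, Z; μ] = cov[μ[X | m], μ[Z | m]; μ] := by
  have hcondX := hX.condExp (m := m) one_le_two
  have hcondZ := hZ.condExp (m := m) one_le_two
  rw [covariance_eq_sub hX hZ, covariance_eq_sub hcondX hcondZ, integral_condExp hm,
    integral_condExp hm, ← integral_condExp hm,
    integral_congr_ae (h.condExp_mul_ae_eq (hX.integrable one_le_two)
      (hZ.integrable one_le_two) (hX.integrable_mul hZ))]

end CondIndep

end ProbabilityTheory

theorem dpi_corr_le_corrRatio_mul_general {Ω β : Type*} [m : MeasurableSpace Ω] [StandardBorelSpace Ω]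
    [mβ : MeasurableSpace β] (μ : Measure Ω) [IsProbabilityMeasure μ]
    (X Z : Ω → ℝ) (Y : Ω → β)
    (hX : MemLp X 2 μ) (hZ : MemLp Z 2 μ) (hY : Measurable Y)
    (hMarkov : CondIndepFun (MeasurableSpace.comap Y mβ) hY.comap_le X Z μ) :
    corr μ X Z ≤ corrRatio μ X Y * corrRatio μ Z Y := by
  have hcov : cov μ X Z = cov[μ[X | mβ.comap Y], μ[Z | mβ.comap Y]; μ] :=
    hMarkov.covariance_eq_covariance_condExp hX hZ
  have hCS := covariance_le_sqrt_variance_mul_sqrt_variance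
    (hX.condExp (m := mβ.comap Y) one_le_two) (hZ.condExp (m := mβ.comap Y) one_le_two)
  rw [corr, corrRatio, corrRatio, Real.sqrt_div (variance_nonneg _ _),
    Real.sqrt_div (variance_nonneg _ _), div_mul_div_comm, hcov]
  exact div_le_div_of_nonneg_right hCS (by positivity)

theorem dpi_corr_le_corrRatio_mul {Ω β : Type*} [m : MeasurableSpace Ω] [StandardBorelSpace Ω]
    [mβ : MeasurableSpace β] (μ : Measure Ω) [IsProbabilityMeasure μ]
    (X Z : Ω → ℝ) (Y : Ω → β)
    (hX : MemLp X 2 μ) (hZ : MemLp Z 2 μ) (hY : Measurable Y)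
    (hvX : 0 < variance X μ) (hvZ : 0 < variance Z μ)
    (hMarkov : CondIndepFun (MeasurableSpace.comap Y mβ) hY.comap_le X Z μ) :
    corr μ X Z ≤ corrRatio μ X Y * corrRatio μ Z Y :=
  dpi_corr_le_corrRatio_mul_general (m := m) (mβ := mβ) μ X Z Y hX hZ hY hMarkov
end

section
/- Tensorization (Witsenhausen): for independent pairs (W₁ᵢ, W₂ᵢ), i = 1,…,n, the maximal correlation of the tuples satisfies ρₘ(W₁ⁿ, W₂ⁿ) ≤ max_{1≤i≤n} ρₘ(W₁ᵢ, W₂ᵢ), where W_kⁿ = (W_{k,1},…,W_{k,n}). -/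
open MeasureTheory ProbabilityTheory

/-- Hirschfeld–Gebelein–Rényi maximal correlation. -/
noncomputable def maxCorr {Ω β γ : Type*} [MeasurableSpace Ω] [MeasurableSpace β]
    [MeasurableSpace γ] (μ : Measure Ω) (A : Ω → β) (B : Ω → γ) : ℝ :=
  sSup {r : ℝ | ∃ (f : β → ℝ) (g : γ → ℝ), Measurable f ∧ Measurable g ∧
    MemLp (fun ω => f (A ω)) 2 μ ∧ MemLp (fun ω => g (B ω)) 2 μ ∧
    0 < variance (fun ω => f (A ω)) μ ∧ 0 < variance (fun ω => g (B ω)) μ ∧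
    r = corr μ (fun ω => f (A ω)) (fun ω => g (B ω))}

/-!
Say that `ρ` bounds the correlation of `(A, B)` if `cov(f A, g B) ≤ ρ σ(f A) σ(g B)` for all
square-integrable `f`, `g`. If `(A, B)` and `(C, D)` are independent, their joint law is a product
measure, and conditioning on `(A, B)` splits the covariance of `f (A, C)` and `g (B, D)` into the
mean of the conditional covariances plus the covariance of the conditional means; the variances
split in the same way. Bounding both parts by `ρ`, Cauchy–Schwarz in `L²` and then in `ℝ²` shows
that `ρ` bounds the correlation of `((A, C), (B, D))`. Adding the pairs one at a time, with the
coordinates not yet added frozen at constants, gives the tensorization.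
-/

theorem Real.sqrt_mul_sqrt_add_sqrt_mul_sqrt_le {p q r s : ℝ} (hp : 0 ≤ p) (hq : 0 ≤ q)
    (hr : 0 ≤ r) (hs : 0 ≤ s) : √p * √q + √r * √s ≤ √(p + r) * √(q + s) := by
  rw [← Real.sqrt_mul (add_nonneg hp hr)]
  refine Real.le_sqrt_of_sq_le ?_
  have := sq_nonneg (√p * √s - √q * √r)
  nlinarith [Real.sq_sqrt hp, Real.sq_sqrt hq, Real.sq_sqrt hr, Real.sq_sqrt hs]

theorem Real.sSup_nonneg_of_neg_mem {S : Set ℝ} (hS : ∀ x ∈ S, -x ∈ S) : 0 ≤ sSup S := by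
  obtain rfl | ⟨x, hx⟩ := S.eq_empty_or_nonempty
  · exact Real.sSup_empty.ge
  · rcases le_total 0 x with h | h
    · exact Real.sSup_nonneg' ⟨x, hx, h⟩
    · exact Real.sSup_nonneg' ⟨-x, hS x hx, neg_nonneg.2 h⟩

namespace MeasureTheory

variable {α β : Type*} [MeasurableSpace α] [MeasurableSpace β] {μ : Measure α} {ν : Measure β}

section Sqrt

variable {a b : α → ℝ}

theorem Integrable.memLp_sqrt (ha : Integrable a μ) (ha₀ : 0 ≤ᵐ[μ] a) :
    MemLp (fun x => √(a x)) 2 μ := by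
  refine (memLp_two_iff_integrable_sq
    (Real.continuous_sqrt.comp_aestronglyMeasurable ha.aestronglyMeasurable)).2 (ha.congr ?_)
  filter_upwards [ha₀] with x hx using (Real.sq_sqrt hx).symm

theorem Integrable.sqrt_mul_sqrt (ha : Integrable a μ) (ha₀ : 0 ≤ᵐ[μ] a) (hb : Integrable b μ)
    (hb₀ : 0 ≤ᵐ[μ] b) : Integrable (fun x => √(a x) * √(b x)) μ :=
  (ha.memLp_sqrt ha₀).integrable_mul (hb.memLp_sqrt hb₀)

theorem integral_sqrt_mul_sqrt_le (ha : Integrable a μ) (ha₀ : 0 ≤ᵐ[μ] a) (hb : Integrable b μ)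
    (hb₀ : 0 ≤ᵐ[μ] b) : ∫ x, √(a x) * √(b x) ∂μ ≤ √(∫ x, a x ∂μ) * √(∫ x, b x ∂μ) := by
  have h := integral_mul_le_Lp_mul_Lq_of_nonneg Real.HolderConjugate.two_two
    (.of_forall fun x => Real.sqrt_nonneg (a x)) (.of_forall fun x => Real.sqrt_nonneg (b x))
    (by simpa using ha.memLp_sqrt ha₀) (by simpa using hb.memLp_sqrt hb₀)
  have hsq : ∀ {c : α → ℝ}, 0 ≤ᵐ[μ] c → ∫ x, √(c x) ^ (2 : ℝ) ∂μ = ∫ x, c x ∂μ := fun hc =>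
    integral_congr_ae (by filter_upwards [hc] with x hx using by simp [Real.sq_sqrt hx])
  rwa [hsq ha₀, hsq hb₀, ← Real.sqrt_eq_rpow, ← Real.sqrt_eq_rpow] at h

end Sqrt

theorem sq_integral_le_integral_sq [IsProbabilityMeasure μ] {f : α → ℝ} (hf : MemLp f 2 μ) :
    (∫ x, f x ∂μ) ^ 2 ≤ ∫ x, f x ^ 2 ∂μ := by
  have h := variance_nonneg f μ
  rw [variance_eq_sub hf] at h
  simp only [Pi.pow_apply] at h
  linarith

variable {F : α × β → ℝ}

theorem MemLp.prod_right_ae [SFinite μ] [SFinite ν] (hF : MemLp F 2 (μ.prod ν)) :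
    ∀ᵐ x ∂μ, MemLp (fun y => F (x, y)) 2 ν := by
  filter_upwards [hF.aestronglyMeasurable.prodMk_left, hF.integrable_sq.prod_right_ae]
    with x hm hi
  exact (memLp_two_iff_integrable_sq hm).2 hi

theorem MemLp.integral_prod_left [SFinite μ] [IsProbabilityMeasure ν]
    (hF : MemLp F 2 (μ.prod ν)) : MemLp (fun x => ∫ y, F (x, y) ∂ν) 2 μ := by
  have hm := hF.aestronglyMeasurable.integral_prod_right'
  refine (memLp_two_iff_integrable_sq hm).2 <|
    hF.integrable_sq.integral_prod_left.mono' (hm.pow 2) ?_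
  filter_upwards [hF.prod_right_ae] with x hx
  rw [Real.norm_eq_abs, abs_of_nonneg (sq_nonneg _)]
  exact sq_integral_le_integral_sq hx

end MeasureTheory

namespace ProbabilityTheory

variable {α β : Type*} [MeasurableSpace α] [MeasurableSpace β] {μ : Measure α} {ν : Measure β}
  [IsProbabilityMeasure μ] [IsProbabilityMeasure ν]

theorem abs_covariance_le {X Y : α → ℝ} (hX : MemLp X 2 μ) (hY : MemLp Y 2 μ) :
    |cov[X, Y; μ]| ≤ √Var[X; μ] * √Var[Y; μ] := by
  have hsq : ∀ {Z : α → ℝ}, MemLp Z 2 μ → Integrable (fun x => (Z x - μ[Z]) ^ 2) μ := fun hZ =>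
    (hZ.sub (memLp_const _)).integrable_sq
  calc |cov[X, Y; μ]| ≤ ∫ x, |X x - μ[X]| * |Y x - μ[Y]| ∂μ := by
        simp only [covariance, ← abs_mul]
        exact abs_integral_le_integral_abs
    _ = ∫ x, √((X x - μ[X]) ^ 2) * √((Y x - μ[Y]) ^ 2) ∂μ := by simp [Real.sqrt_sq_eq_abs]
    _ ≤ √Var[X; μ] * √Var[Y; μ] := by
      rw [variance_eq_integral hX.aemeasurable, variance_eq_integral hY.aemeasurable]
      exact integral_sqrt_mul_sqrt_le (hsq hX) (.of_forall fun _ => sq_nonneg _) (hsq hY)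
        (.of_forall fun _ => sq_nonneg _)

variable {F G : α × β → ℝ}

theorem covariance_prodMk_ae_eq (hF : MemLp F 2 (μ.prod ν)) (hG : MemLp G 2 (μ.prod ν)) :
    (fun x => cov[fun y => F (x, y), fun y => G (x, y); ν]) =ᵐ[μ]
      fun x => ∫ y, F (x, y) * G (x, y) ∂ν - (∫ y, F (x, y) ∂ν) * ∫ y, G (x, y) ∂ν := by
  filter_upwards [hF.prod_right_ae, hG.prod_right_ae] with x hFx hGx
  exact covariance_eq_sub hFx hGx

theorem integrable_covariance_prodMk (hF : MemLp F 2 (μ.prod ν)) (hG : MemLp G 2 (μ.prod ν)) :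
    Integrable (fun x => cov[fun y => F (x, y), fun y => G (x, y); ν]) μ := by
  refine Integrable.congr ?_ (covariance_prodMk_ae_eq hF hG).symm
  exact (hF.integrable_mul hG).integral_prod_left.sub
    (hF.integral_prod_left.integrable_mul hG.integral_prod_left)

theorem covariance_prod_eq_integral_add (hF : MemLp F 2 (μ.prod ν))
    (hG : MemLp G 2 (μ.prod ν)) :
    cov[F, G; μ.prod ν] = ∫ x, cov[fun y => F (x, y), fun y => G (x, y); ν] ∂μ +
      cov[fun x => ∫ y, F (x, y) ∂ν, fun x => ∫ y, G (x, y) ∂ν; μ] := by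
  have hFG : Integrable (fun x => ∫ y, F (x, y) * G (x, y) ∂ν) μ :=
    (hF.integrable_mul hG).integral_prod_left
  have hmFmG : Integrable (fun x => (∫ y, F (x, y) ∂ν) * ∫ y, G (x, y) ∂ν) μ :=
    hF.integral_prod_left.integrable_mul hG.integral_prod_left
  rw [integral_congr_ae (covariance_prodMk_ae_eq hF hG), integral_sub hFG hmFmG,
    covariance_eq_sub hF hG, covariance_eq_sub hF.integral_prod_left hG.integral_prod_left,
    integral_prod _ (hF.integrable_mul hG), integral_prod _ (hF.integrable one_le_two),
    integral_prod _ (hG.integrable one_le_two)]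
  simp only [Pi.mul_apply]
  ring

theorem integrable_variance_prodMk (hF : MemLp F 2 (μ.prod ν)) :
    Integrable (fun x => Var[fun y => F (x, y); ν]) μ :=
  (integrable_covariance_prodMk hF hF).congr <| by
    filter_upwards [hF.prod_right_ae] with x hx using covariance_self hx.aemeasurable

theorem variance_prod_eq_integral_add (hF : MemLp F 2 (μ.prod ν)) :
    Var[F; μ.prod ν] =
      ∫ x, Var[fun y => F (x, y); ν] ∂μ + Var[fun x => ∫ y, F (x, y) ∂ν; μ] := by
  rw [← covariance_self hF.aemeasurable, ← covariance_self hF.integral_prod_left.aemeasurable,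
    covariance_prod_eq_integral_add hF hF]
  congr 1
  refine integral_congr_ae ?_
  filter_upwards [hF.prod_right_ae] with x hx using covariance_self hx.aemeasurable

theorem covariance_prod_le {ρ : ℝ} (hρ : 0 ≤ ρ) (hF : MemLp F 2 (μ.prod ν))
    (hG : MemLp G 2 (μ.prod ν))
    (hslice : ∀ᵐ x ∂μ, cov[fun y => F (x, y), fun y => G (x, y); ν] ≤
      ρ * (√Var[fun y => F (x, y); ν] * √Var[fun y => G (x, y); ν]))
    (hmean : cov[fun x => ∫ y, F (x, y) ∂ν, fun x => ∫ y, G (x, y) ∂ν; μ] ≤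
      ρ * (√Var[fun x => ∫ y, F (x, y) ∂ν; μ] * √Var[fun x => ∫ y, G (x, y) ∂ν; μ])) :
    cov[F, G; μ.prod ν] ≤ ρ * (√Var[F; μ.prod ν] * √Var[G; μ.prod ν]) := by
  have hvF := integrable_variance_prodMk hF
  have hvG := integrable_variance_prodMk hG
  have hv₀ : ∀ Z : α × β → ℝ, 0 ≤ᵐ[μ] fun x => Var[fun y => Z (x, y); ν] :=
    fun Z => .of_forall fun x => variance_nonneg _ _
  calc cov[F, G; μ.prod ν]
      = ∫ x, cov[fun y => F (x, y), fun y => G (x, y); ν] ∂μ +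
          cov[fun x => ∫ y, F (x, y) ∂ν, fun x => ∫ y, G (x, y) ∂ν; μ] :=
        covariance_prod_eq_integral_add hF hG
    _ ≤ ∫ x, ρ * (√Var[fun y => F (x, y); ν] * √Var[fun y => G (x, y); ν]) ∂μ +
          ρ * (√Var[fun x => ∫ y, F (x, y) ∂ν; μ] * √Var[fun x => ∫ y, G (x, y) ∂ν; μ]) :=
        add_le_add (integral_mono_ae (integrable_covariance_prodMk hF hG)
          ((hvF.sqrt_mul_sqrt (hv₀ F) hvG (hv₀ G)).const_mul ρ) hslice) hmean
    _ ≤ ρ * (√(∫ x, Var[fun y => F (x, y); ν] ∂μ) * √(∫ x, Var[fun y => G (x, y); ν] ∂μ) +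
          √Var[fun x => ∫ y, F (x, y) ∂ν; μ] * √Var[fun x => ∫ y, G (x, y) ∂ν; μ]) := by
        rw [integral_const_mul, mul_add]
        gcongr
        exact integral_sqrt_mul_sqrt_le hvF (hv₀ F) hvG (hv₀ G)
    _ ≤ ρ * (√Var[F; μ.prod ν] * √Var[G; μ.prod ν]) := by
        rw [variance_prod_eq_integral_add hF, variance_prod_eq_integral_add hG]
        gcongr
        exact Real.sqrt_mul_sqrt_add_sqrt_mul_sqrt_le
          (integral_nonneg fun _ => variance_nonneg _ _)
          (integral_nonneg fun _ => variance_nonneg _ _) (variance_nonneg _ _)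
          (variance_nonneg _ _)

end ProbabilityTheory

section Correlation

variable {Ω : Type*} [MeasurableSpace Ω] {μ : Measure Ω} {X Y : Ω → ℝ}

theorem corr_fun_neg_left : corr μ (fun ω => -X ω) Y = -corr μ X Y := by
  change cov[_, _; μ] / _ = -(cov[_, _; μ] / _)
  rw [covariance_fun_neg_left, variance_fun_neg, neg_div]

theorem corr_le_one [IsProbabilityMeasure μ] (hX : MemLp X 2 μ) (hY : MemLp Y 2 μ) :
    corr μ X Y ≤ 1 :=
  div_le_one_of_le₀ ((le_abs_self _).trans (abs_covariance_le hX hY)) (by positivity)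

end Correlation

section MaxCorrLE

variable {Ω β γ β' γ' : Type*} [MeasurableSpace Ω] [MeasurableSpace β] [MeasurableSpace γ]
  [MeasurableSpace β'] [MeasurableSpace γ'] {μ : Measure Ω} {A : Ω → β} {B : Ω → γ} {ρ : ℝ}

/-- `ρₘ(A, B) ≤ ρ`, tested on all square-integrable functions of `A` and `B`, including those of
zero variance, which `maxCorr` excludes. -/
def MaxCorrLE (μ : Measure Ω) (A : Ω → β) (B : Ω → γ) (ρ : ℝ) : Prop :=
  ∀ ⦃f : β → ℝ⦄ ⦃g : γ → ℝ⦄, Measurable f → Measurable g →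
    MemLp (fun ω => f (A ω)) 2 μ → MemLp (fun ω => g (B ω)) 2 μ →
    cov[fun ω => f (A ω), fun ω => g (B ω); μ] ≤
      ρ * (√Var[fun ω => f (A ω); μ] * √Var[fun ω => g (B ω); μ])

theorem MaxCorrLE.mono {ρ' : ℝ} (h : MaxCorrLE μ A B ρ) (hρ : ρ ≤ ρ') : MaxCorrLE μ A B ρ' :=
  fun _ _ hf hg hF hG => (h hf hg hF hG).trans (by gcongr)

theorem MaxCorrLE.comp (h : MaxCorrLE μ A B ρ) {φ : β → β'} {ψ : γ → γ'} (hφ : Measurable φ)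
    (hψ : Measurable ψ) : MaxCorrLE μ (fun ω => φ (A ω)) (fun ω => ψ (B ω)) ρ :=
  fun _ _ hf hg => h (hf.comp hφ) (hg.comp hψ)

theorem maxCorrLE_const [IsProbabilityMeasure μ] (hρ : 0 ≤ ρ) (b : β) (c : γ) :
    MaxCorrLE μ (fun _ => b) (fun _ => c) ρ := by
  intro f g _ _ _ _
  rw [covariance_const_left]
  positivity

theorem maxCorrLE_map_iff {Δ : Type*} [MeasurableSpace Δ] {R : Ω → Δ} (hR : Measurable R)
    {A : Δ → β} {B : Δ → γ} (hA : Measurable A) (hB : Measurable B) :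
    MaxCorrLE (μ.map R) A B ρ ↔ MaxCorrLE μ (fun ω => A (R ω)) (fun ω => B (R ω)) ρ := by
  refine forall₂_congr fun f g => forall₂_congr fun hf hg => ?_
  have hfA := (hf.comp hA).aemeasurable (μ := μ.map R)
  have hgB := (hg.comp hB).aemeasurable (μ := μ.map R)
  have hF := memLp_map_measure_iff (p := 2) hfA.aestronglyMeasurable hR.aemeasurable
  have hG := memLp_map_measure_iff (p := 2) hgB.aestronglyMeasurable hR.aemeasurable
  have hcov := covariance_map hfA.aestronglyMeasurable hgB.aestronglyMeasurable hR.aemeasurable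
  have hvf := variance_map hfA hR.aemeasurable
  have hvg := variance_map hgB hR.aemeasurable
  simp only [Function.comp_def] at hF hG hcov hvf hvg
  rw [hF, hG, hcov, hvf, hvg]

theorem corr_le_maxCorr [IsProbabilityMeasure μ] {f : β → ℝ} {g : γ → ℝ} (hf : Measurable f)
    (hg : Measurable g) (hF : MemLp (fun ω => f (A ω)) 2 μ) (hG : MemLp (fun ω => g (B ω)) 2 μ)
    (hvf : 0 < Var[fun ω => f (A ω); μ]) (hvg : 0 < Var[fun ω => g (B ω); μ]) :
    corr μ (fun ω => f (A ω)) (fun ω => g (B ω)) ≤ maxCorr μ A B := by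
  refine le_csSup ⟨1, ?_⟩ ⟨f, g, hf, hg, hF, hG, hvf, hvg, rfl⟩
  rintro _ ⟨f, g, -, -, hF, hG, -, -, rfl⟩
  exact corr_le_one hF hG

theorem maxCorr_nonneg : 0 ≤ maxCorr μ A B := by
  refine Real.sSup_nonneg_of_neg_mem ?_
  rintro _ ⟨f, g, hf, hg, hF, hG, hvf, hvg, rfl⟩
  exact ⟨fun b => -f b, g, hf.neg, hg, hF.neg, hG, by rwa [variance_fun_neg], hvg,
    corr_fun_neg_left.symm⟩

theorem maxCorrLE_maxCorr [IsProbabilityMeasure μ] : MaxCorrLE μ A B (maxCorr μ A B) := by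
  intro f g hf hg hF hG
  by_cases hv : 0 < Var[fun ω => f (A ω); μ] ∧ 0 < Var[fun ω => g (B ω); μ]
  · have hs : 0 < √Var[fun ω => f (A ω); μ] * √Var[fun ω => g (B ω); μ] :=
      mul_pos (Real.sqrt_pos.2 hv.1) (Real.sqrt_pos.2 hv.2)
    calc cov[fun ω => f (A ω), fun ω => g (B ω); μ]
        = corr μ (fun ω => f (A ω)) (fun ω => g (B ω)) *
          (√Var[fun ω => f (A ω); μ] * √Var[fun ω => g (B ω); μ]) :=
          (div_mul_cancel₀ _ hs.ne').symm
      _ ≤ _ := by gcongr; exact corr_le_maxCorr hf hg hF hG hv.1 hv.2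
  · have hs : √Var[fun ω => f (A ω); μ] * √Var[fun ω => g (B ω); μ] = 0 := by
      rw [not_and_or, not_lt, not_lt] at hv
      rcases hv with h | h <;> simp [le_antisymm h (variance_nonneg _ _)]
    rw [hs, mul_zero]
    exact (le_abs_self _).trans ((abs_covariance_le hF hG).trans_eq hs)

theorem maxCorr_le_of_maxCorrLE (hρ : 0 ≤ ρ) (h : MaxCorrLE μ A B ρ) : maxCorr μ A B ≤ ρ := by
  refine Real.sSup_le ?_ hρ
  rintro _ ⟨f, g, hf, hg, hF, hG, hvf, hvg, rfl⟩
  exact div_le_of_le_mul₀ (by positivity) hρ (h hf hg hF hG)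

theorem MaxCorrLE.prod {P : Measure (β × γ)} {Q : Measure (β' × γ')} [IsProbabilityMeasure P]
    [IsProbabilityMeasure Q] (hρ : 0 ≤ ρ) (hP : MaxCorrLE P Prod.fst Prod.snd ρ)
    (hQ : MaxCorrLE Q Prod.fst Prod.snd ρ) :
    MaxCorrLE (P.prod Q) (fun z => (z.1.1, z.2.1)) (fun z => (z.1.2, z.2.2)) ρ := by
  intro f g hf hg hF hG
  refine covariance_prod_le hρ hF hG ?_ ?_
  · filter_upwards [hF.prod_right_ae, hG.prod_right_ae] with y hFy hGy
    exact hQ (f := fun b' => f (y.1, b')) (g := fun c' => g (y.2, c'))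
      (hf.comp measurable_prodMk_left) (hg.comp measurable_prodMk_left) hFy hGy
  · have hmF : Measurable fun b => ∫ x, f (b, x.1) ∂Q :=
      (hf.comp (measurable_fst.prodMk (measurable_fst.comp measurable_snd))).stronglyMeasurable
        |>.integral_prod_right'.measurable
    have hmG : Measurable fun c => ∫ x, g (c, x.2) ∂Q :=
      (hg.comp (measurable_fst.prodMk (measurable_snd.comp measurable_snd))).stronglyMeasurable
        |>.integral_prod_right'.measurable
    exact hP hmF hmG hF.integral_prod_left hG.integral_prod_left

theorem MaxCorrLE.prodMk_of_indepFun [IsProbabilityMeasure μ] {C : Ω → β'} {D : Ω → γ'}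
    (hA : Measurable A) (hB : Measurable B) (hC : Measurable C) (hD : Measurable D)
    (hind : IndepFun (fun ω => (A ω, B ω)) (fun ω => (C ω, D ω)) μ) (hρ : 0 ≤ ρ)
    (h₁ : MaxCorrLE μ A B ρ) (h₂ : MaxCorrLE μ C D ρ) :
    MaxCorrLE μ (fun ω => (A ω, C ω)) (fun ω => (B ω, D ω)) ρ := by
  have hAB := hA.prodMk hB
  have hCD := hC.prodMk hD
  have := Measure.isProbabilityMeasure_map (μ := μ) hAB.aemeasurable
  have := Measure.isProbabilityMeasure_map (μ := μ) hCD.aemeasurable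
  have hprod := ((maxCorrLE_map_iff hAB measurable_fst measurable_snd).2 h₁).prod hρ
    ((maxCorrLE_map_iff hCD measurable_fst measurable_snd).2 h₂)
  rw [← (indepFun_iff_map_prod_eq_prod_map_map hAB.aemeasurable hCD.aemeasurable).1 hind] at hprod
  exact (maxCorrLE_map_iff (hAB.prodMk hCD) (by fun_prop) (by fun_prop)).1 hprod

end MaxCorrLE

section Padding

variable {Ω ι : Type*} [MeasurableSpace Ω] [DecidableEq ι] {δ : ι → Type*}
  [∀ i, MeasurableSpace (δ i)] {Z : ∀ i, Ω → δ i}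

theorem measurable_finset_piecewise (hZ : ∀ i, Measurable (Z i)) (d : ∀ i, δ i) (S : Finset ι) :
    Measurable fun ω => S.piecewise (Z · ω) d :=
  measurable_pi_lambda _ fun i => by by_cases hi : i ∈ S <;> simp [hi, hZ i]

theorem ProbabilityTheory.iIndepFun.indepFun_finset_piecewise {μ : Measure Ω}
    (h : iIndepFun Z μ) (hZ : ∀ i, Measurable (Z i)) (d : ∀ i, δ i) {S : Finset ι} {j : ι}
    (hj : j ∉ S) : IndepFun (fun ω => S.piecewise (Z · ω) d) (Z j) μ := by
  let pad : (∀ i : S, δ i) → ∀ i, δ i := fun z i => if hi : i ∈ S then z ⟨i, hi⟩ else d i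
  have hpad : Measurable pad := measurable_pi_lambda _ fun i => by
    by_cases hi : i ∈ S <;> simp [pad, hi, measurable_pi_apply]
  convert (h.indepFun_finset S {j} (Finset.disjoint_singleton_right.2 hj) hZ).comp hpad
    (measurable_pi_apply ⟨j, Finset.mem_singleton_self j⟩) using 1
  · funext ω i
    by_cases hi : i ∈ S <;> simp [pad, hi]
  · rfl

end Padding

section Pi

variable {Ω ι : Type*} [MeasurableSpace Ω] {μ : Measure Ω} [IsProbabilityMeasure μ]
  {β γ : ι → Type*} [∀ i, MeasurableSpace (β i)] [∀ i, MeasurableSpace (γ i)]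
  {W₁ : ∀ i, Ω → β i} {W₂ : ∀ i, Ω → γ i} {ρ : ℝ}

theorem MaxCorrLE.finset_piecewise [DecidableEq ι] (hW₁ : ∀ i, Measurable (W₁ i))
    (hW₂ : ∀ i, Measurable (W₂ i)) (hind : iIndepFun (fun i ω => (W₁ i ω, W₂ i ω)) μ)
    (hρ : 0 ≤ ρ) (h : ∀ i, MaxCorrLE μ (W₁ i) (W₂ i) ρ) (d₁ : ∀ i, β i) (d₂ : ∀ i, γ i)
    (S : Finset ι) :
    MaxCorrLE μ (fun ω => S.piecewise (W₁ · ω) d₁) (fun ω => S.piecewise (W₂ · ω) d₂) ρ := by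
  induction S using Finset.induction_on with
  | empty => simpa only [Finset.piecewise_empty] using maxCorrLE_const hρ d₁ d₂
  | insert j S hj ih =>
    have hpair : IndepFun (fun ω => (S.piecewise (W₁ · ω) d₁, S.piecewise (W₂ · ω) d₂))
        (fun ω => (W₁ j ω, W₂ j ω)) μ := by
      have hsplit : Measurable fun z : ∀ i, β i × γ i => (fun i => (z i).1, fun i => (z i).2) := by
        fun_prop
      convert (hind.indepFun_finset_piecewise (fun i => (hW₁ i).prodMk (hW₂ i))
        (fun i => (d₁ i, d₂ i)) hj).comp hsplit measurable_id using 1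
      · funext ω
        ext i <;> by_cases hi : i ∈ S <;> simp [hi]
      · rfl
    simp only [Finset.piecewise_insert]
    exact (ih.prodMk_of_indepFun (measurable_finset_piecewise hW₁ d₁ S)
      (measurable_finset_piecewise hW₂ d₂ S) (hW₁ j) (hW₂ j) hpair hρ (h j)).comp
      measurable_update' measurable_update'

theorem MaxCorrLE.pi_of_iIndepFun [Fintype ι] (hW₁ : ∀ i, Measurable (W₁ i))
    (hW₂ : ∀ i, Measurable (W₂ i)) (hind : iIndepFun (fun i ω => (W₁ i ω, W₂ i ω)) μ)
    (hρ : 0 ≤ ρ) (h : ∀ i, MaxCorrLE μ (W₁ i) (W₂ i) ρ) :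
    MaxCorrLE μ (fun ω i => W₁ i ω) (fun ω i => W₂ i ω) ρ := by
  classical
  obtain ⟨ω₀⟩ := nonempty_of_isProbabilityMeasure μ
  simpa only [Finset.piecewise_univ] using
    MaxCorrLE.finset_piecewise hW₁ hW₂ hind hρ h (W₁ · ω₀) (W₂ · ω₀) Finset.univ

end Pi

/-- Witsenhausen's tensorization: for mutually independent pairs `(W₁ᵢ, W₂ᵢ)`,
`ρₘ(W₁ⁿ, W₂ⁿ) ≤ max_i ρₘ(W₁ᵢ, W₂ᵢ)`. -/
theorem maxCorr_tensorization {Ω : Type*} [MeasurableSpace Ω]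
    (μ : Measure Ω) [IsProbabilityMeasure μ] (n : ℕ) (hn : 0 < n)
    {β γ : Fin n → Type*} [∀ i, MeasurableSpace (β i)] [∀ i, MeasurableSpace (γ i)]
    (W₁ : ∀ i, Ω → β i) (W₂ : ∀ i, Ω → γ i)
    (hW₁ : ∀ i, Measurable (W₁ i)) (hW₂ : ∀ i, Measurable (W₂ i))
    (hIndep : iIndepFun (m := fun i => (inferInstance : MeasurableSpace (β i × γ i)))
      (fun i ω => (W₁ i ω, W₂ i ω)) μ) :
    haveI : Nonempty (Fin n) := Fin.pos_iff_nonempty.mp hn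
    maxCorr μ (fun ω i => W₁ i ω) (fun ω i => W₂ i ω) ≤ ⨆ i, maxCorr μ (W₁ i) (W₂ i) := by
  have hρ : 0 ≤ ⨆ i, maxCorr μ (W₁ i) (W₂ i) := Real.iSup_nonneg fun _ => maxCorr_nonneg
  refine maxCorr_le_of_maxCorrLE hρ (MaxCorrLE.pi_of_iIndepFun hW₁ hW₂ hIndep hρ fun i => ?_)
  exact maxCorrLE_maxCorr.mono <|
    le_ciSup (Finite.bddAbove_range fun i => maxCorr μ (W₁ i) (W₂ i)) i
end

section
/- Conditional correlation bound via the chain rule: if X₁, X₂ are real square-integrable random variables with positive variances, W₀ is any random variable, θ₁ = θ(X₁, (X₂,W₀)) and ρ* ≥ θ(X₁, X₂ | W₀), then 1 − θ(X₁,W₀)² ≤ min((1 − ρ(X₁,X₂)²)/(1 − ρ*²), 1), provided ρ* < 1. -/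
/-!
Conditioning on `(X₂, W₀)` can only do better than the best affine predictor of `X₁` from `X₂`,
whose mean squared error is `var X₁ · (1 - ρ(X₁, X₂)²)`. Chaining through `W₀` writes that same
conditional variance as `E[var(X₁ | W₀)] · (1 - θ(X₁, X₂ | W₀)²) ≥ E[var(X₁ | W₀)] · (1 - ρ*²)`,
and dividing by `var X₁` gives the bound.
-/

open MeasureTheory ProbabilityTheory

/-- Expected conditional variance `E[var(X | Z)] = E[(X - E[X|Z])²]`. -/
noncomputable def expCondVar {Ω β : Type*} [m : MeasurableSpace Ω] [mβ : MeasurableSpace β]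
    (μ : Measure Ω) (X : Ω → ℝ) (Z : Ω → β) : ℝ :=
  ∫ ω, (X ω - (μ[X | MeasurableSpace.comap Z mβ]) ω)^2 ∂μ

/-- Squared correlation ratio `θ(X, Z)² = 1 - E[var(X|Z)] / var(X)`. -/
noncomputable def corrRatioSq {Ω β : Type*} [m : MeasurableSpace Ω] [mβ : MeasurableSpace β]
    (μ : Measure Ω) (X : Ω → ℝ) (Z : Ω → β) : ℝ :=
  1 - expCondVar μ X Z / variance X μ

/-- Squared conditional correlation ratio
`θ(X₁, X₂ | W₀)² = 1 - E[var(X₁|X₂,W₀)] / E[var(X₁|W₀)]`. -/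
noncomputable def condCorrRatioSq {Ω β : Type*} [m : MeasurableSpace Ω]
    [mβ : MeasurableSpace β] (μ : Measure Ω) (X₁ X₂ : Ω → ℝ) (W₀ : Ω → β) : ℝ :=
  1 - expCondVar μ X₁ (fun ω => (X₂ ω, W₀ ω)) / expCondVar μ X₁ W₀

section ConditionalExpectation

variable {Ω : Type*} {m m₀ : MeasurableSpace Ω} {μ : Measure[m₀] Ω} [IsFiniteMeasure μ]
  {X Y : Ω → ℝ}

lemma integral_mul_condExp (hm : m ≤ m₀) (hX : MemLp X 2 μ) (hY : MemLp Y 2 μ)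
    (hYm : StronglyMeasurable[m] Y) :
    ∫ ω, Y ω * (μ[X | m]) ω ∂μ = ∫ ω, Y ω * X ω ∂μ := by
  calc ∫ ω, Y ω * (μ[X | m]) ω ∂μ = ∫ ω, (μ[Y * X | m]) ω ∂μ :=
        integral_congr_ae
          (condExp_mul_of_stronglyMeasurable_left hYm (hY.integrable_mul hX)
            (hX.integrable one_le_two)).symm
    _ = ∫ ω, Y ω * X ω ∂μ := integral_condExp hm

/-- Pythagoras in `L²(μ)`: `X - μ[X | m]` is orthogonal to every `m`-measurable `L²` function. -/
lemma integral_sub_sq_eq_add_condExp (hm : m ≤ m₀) (hX : MemLp X 2 μ) (hY : MemLp Y 2 μ)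
    (hYm : StronglyMeasurable[m] Y) :
    ∫ ω, (X ω - Y ω) ^ 2 ∂μ =
      ∫ ω, (X ω - (μ[X | m]) ω) ^ 2 ∂μ + ∫ ω, ((μ[X | m]) ω - Y ω) ^ 2 ∂μ := by
  set E := μ[X | m]
  have hE : MemLp E 2 μ := hX.condExp one_le_two
  have hEY : MemLp (E - Y) 2 μ := hE.sub hY
  have hXE_sq : Integrable (fun ω => (X ω - E ω) ^ 2) μ := (hX.sub hE).integrable_sq
  have hEY_sq : Integrable (fun ω => (E ω - Y ω) ^ 2) μ := hEY.integrable_sq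
  have hEY_X : Integrable (fun ω => (E ω - Y ω) * X ω) μ := hEY.integrable_mul hX
  have hEY_E : Integrable (fun ω => (E ω - Y ω) * E ω) μ := hEY.integrable_mul hE
  have hcross : ∫ ω, ((E ω - Y ω) * X ω - (E ω - Y ω) * E ω) ∂μ = 0 := by
    rw [integral_sub hEY_X hEY_E, sub_eq_zero]
    exact (integral_mul_condExp hm hX hEY (stronglyMeasurable_condExp.sub hYm)).symm
  have hsplit : ∀ ω, (X ω - Y ω) ^ 2 =
      ((X ω - E ω) ^ 2 + (E ω - Y ω) ^ 2) + 2 * ((E ω - Y ω) * X ω - (E ω - Y ω) * E ω) := by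
    intro ω; ring
  simp_rw [hsplit]
  rw [integral_add (hXE_sq.fun_add hEY_sq) ((hEY_X.sub' hEY_E).const_mul 2),
    integral_add hXE_sq hEY_sq, integral_const_mul, hcross, mul_zero, add_zero]

lemma integral_sub_condExp_sq_le (hm : m ≤ m₀) (hX : MemLp X 2 μ) (hY : MemLp Y 2 μ)
    (hYm : StronglyMeasurable[m] Y) :
    ∫ ω, (X ω - (μ[X | m]) ω) ^ 2 ∂μ ≤ ∫ ω, (X ω - Y ω) ^ 2 ∂μ := by
  rw [integral_sub_sq_eq_add_condExp hm hX hY hYm]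
  exact le_add_of_nonneg_right (integral_nonneg fun ω => sq_nonneg _)

end ConditionalExpectation

section CorrelationRatio

variable {Ω β : Type*} [MeasurableSpace Ω] [MeasurableSpace β] {μ : Measure Ω}
  {X Y : Ω → ℝ} {Z : Ω → β}

lemma expCondVar_nonneg : 0 ≤ expCondVar μ X Z :=
  integral_nonneg fun _ => sq_nonneg _

lemma sq_corr (X Y : Ω → ℝ) :
    corr μ X Y ^ 2 = cov μ X Y ^ 2 / (variance X μ * variance Y μ) := by
  rw [corr, div_pow, mul_pow, Real.sq_sqrt (variance_nonneg _ _),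
    Real.sq_sqrt (variance_nonneg _ _)]

/-- The chain rule `1 - θ(X, (Y, W))² = (1 - θ(X, W)²)(1 - θ(X, Y | W)²)`, times `var X`. -/
lemma expCondVar_prod_eq_mul {W : Ω → β} (h : expCondVar μ X W ≠ 0) :
    expCondVar μ X (fun ω => (Y ω, W ω)) =
      expCondVar μ X W * (1 - condCorrRatioSq μ X Y W) := by
  rw [condCorrRatioSq]
  field_simp
  ring

variable [IsFiniteMeasure μ]

lemma integral_centered_sub_mul_sq (hX : MemLp X 2 μ) (hY : MemLp Y 2 μ) (b : ℝ) :
    ∫ ω, ((X ω - ∫ x, X x ∂μ) - b * (Y ω - ∫ x, Y x ∂μ)) ^ 2 ∂μ =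
      variance X μ - 2 * b * cov μ X Y + b ^ 2 * variance Y μ := by
  have hXc : MemLp (fun ω => X ω - ∫ x, X x ∂μ) 2 μ := hX.sub (memLp_const _)
  have hYc : MemLp (fun ω => Y ω - ∫ x, Y x ∂μ) 2 μ := hY.sub (memLp_const _)
  have hsplit : ∀ ω, ((X ω - ∫ x, X x ∂μ) - b * (Y ω - ∫ x, Y x ∂μ)) ^ 2 =
      ((X ω - ∫ x, X x ∂μ) ^ 2 - 2 * b * ((X ω - ∫ x, X x ∂μ) * (Y ω - ∫ x, Y x ∂μ)))
        + b ^ 2 * (Y ω - ∫ x, Y x ∂μ) ^ 2 := by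
    intro ω; ring
  simp_rw [hsplit]
  have hX_sq : Integrable (fun ω => (X ω - ∫ x, X x ∂μ) ^ 2) μ := hXc.integrable_sq
  have hY_sq : Integrable (fun ω => b ^ 2 * (Y ω - ∫ x, Y x ∂μ) ^ 2) μ :=
    hYc.integrable_sq.const_mul _
  have hXY : Integrable
      (fun ω => 2 * b * ((X ω - ∫ x, X x ∂μ) * (Y ω - ∫ x, Y x ∂μ))) μ :=
    (hXc.integrable_mul hYc).const_mul (2 * b)
  rw [integral_add (hX_sq.sub' hXY) hY_sq, integral_sub hX_sq hXY, integral_const_mul,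
    integral_const_mul, variance_eq_integral hX.aemeasurable,
    variance_eq_integral hY.aemeasurable]
  rfl

lemma expCondVar_le_integral_sub_sq (hZ : Measurable Z) (hX : MemLp X 2 μ) (hY : MemLp Y 2 μ)
    (hYm : Measurable[MeasurableSpace.comap Z ‹_›] Y) :
    expCondVar μ X Z ≤ ∫ ω, (X ω - Y ω) ^ 2 ∂μ :=
  integral_sub_condExp_sq_le hZ.comap_le hX hY hYm.stronglyMeasurable

lemma expCondVar_le_variance (hZ : Measurable Z) (hX : MemLp X 2 μ) :
    expCondVar μ X Z ≤ variance X μ := by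
  rw [variance_eq_integral hX.aemeasurable]
  exact expCondVar_le_integral_sub_sq hZ hX (memLp_const _) measurable_const

/-- Compare with the affine predictor `E X + (cov X Y / var Y) (Y - E Y)`, which is
`σ(Z)`-measurable. -/
lemma expCondVar_le_variance_mul_one_sub_sq_corr (hZ : Measurable Z) (hX : MemLp X 2 μ)
    (hY : MemLp Y 2 μ) (hYm : Measurable[MeasurableSpace.comap Z ‹_›] Y) :
    expCondVar μ X Z ≤ variance X μ * (1 - corr μ X Y ^ 2) := by
  set b := cov μ X Y / variance Y μ
  have hpred : expCondVar μ X Z ≤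
      ∫ ω, ((X ω - ∫ x, X x ∂μ) - b * (Y ω - ∫ x, Y x ∂μ)) ^ 2 ∂μ := by
    have h := expCondVar_le_integral_sub_sq hZ hX
      ((memLp_const (∫ x, X x ∂μ)).add ((hY.sub (memLp_const (∫ x, Y x ∂μ))).const_mul b))
      (measurable_const.add ((hYm.sub measurable_const).const_mul b))
    convert h using 4 with ω
    simp only [Pi.add_apply, Pi.sub_apply]
    ring
  refine (hpred.trans_eq (integral_centered_sub_mul_sq hX hY b)).trans ?_
  rw [sq_corr, show b = cov μ X Y / variance Y μ from rfl]
  have hvX := variance_nonneg X μ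
  have hvY := variance_nonneg Y μ
  generalize variance X μ = vX at hvX ⊢
  generalize variance Y μ = vY at hvY ⊢
  -- for `var Y = 0` both `b` and `corr X Y` are `0` by division by zero
  rcases hvY.eq_or_lt with rfl | hvY
  · simp
  rcases hvX.eq_or_lt with rfl | hvX
  · have : 0 ≤ cov μ X Y ^ 2 / vY := by positivity
    field_simp
    nlinarith
  · exact le_of_eq (by field_simp; ring)

end CorrelationRatio

theorem conditional_correlation_bound_general {Ω β : Type*} [m : MeasurableSpace Ω]
    [mβ : MeasurableSpace β] (μ : Measure Ω) [IsProbabilityMeasure μ]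
    (X₁ X₂ : Ω → ℝ) (W₀ : Ω → β) (ρs : ℝ)
    (hX₁ : MemLp X₁ 2 μ) (hX₂ : MemLp X₂ 2 μ)
    (hX₂m : Measurable X₂) (hW₀ : Measurable W₀)
    (hv₁ : 0 < variance X₁ μ)
    (hρs : Real.sqrt (condCorrRatioSq μ X₁ X₂ W₀) ≤ ρs) (hρs1 : ρs < 1) :
    1 - corrRatioSq μ X₁ W₀ ≤
      min ((1 - (corr μ X₁ X₂)^2) / (1 - ρs^2)) 1 := by
  obtain ⟨hρs0, hθ⟩ := Real.sqrt_le_iff.mp hρs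
  have hρs2 : 0 < 1 - ρs ^ 2 := by nlinarith
  -- if `E[var(X₁ | W₀)] = 0`, the junk value `x / 0 = 0` makes `θ(X₁, X₂ | W₀)² = 1 > ρs²`
  have hcv : expCondVar μ X₁ W₀ ≠ 0 := fun h => by
    simp only [condCorrRatioSq, h, div_zero, sub_zero] at hθ
    nlinarith
  have hregr := expCondVar_le_variance_mul_one_sub_sq_corr (hX₂m.prodMk hW₀) hX₁ hX₂
    (measurable_fst.comp (comap_measurable _))
  rw [expCondVar_prod_eq_mul hcv] at hregr
  have hkey : expCondVar μ X₁ W₀ * (1 - ρs ^ 2) ≤ variance X₁ μ * (1 - corr μ X₁ X₂ ^ 2) :=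
    calc expCondVar μ X₁ W₀ * (1 - ρs ^ 2)
        ≤ expCondVar μ X₁ W₀ * (1 - condCorrRatioSq μ X₁ X₂ W₀) :=
          mul_le_mul_of_nonneg_left (by linarith) expCondVar_nonneg
      _ ≤ variance X₁ μ * (1 - corr μ X₁ X₂ ^ 2) := hregr
  rw [corrRatioSq, sub_sub_cancel, le_min_iff, div_le_div_iff₀ hv₁ hρs2]
  exact ⟨by linarith, div_le_one_of_le₀ (expCondVar_le_variance hW₀ hX₁) hv₁.le⟩

theorem conditional_correlation_bound {Ω β : Type*} [m : MeasurableSpace Ω]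
    [mβ : MeasurableSpace β] (μ : Measure Ω) [IsProbabilityMeasure μ]
    (X₁ X₂ : Ω → ℝ) (W₀ : Ω → β) (ρs : ℝ)
    (hX₁ : MemLp X₁ 2 μ) (hX₂ : MemLp X₂ 2 μ)
    (hX₁m : Measurable X₁) (hX₂m : Measurable X₂) (hW₀ : Measurable W₀)
    (hv₁ : 0 < variance X₁ μ) (hv₂ : 0 < variance X₂ μ)
    (hcv : 0 < expCondVar μ X₁ W₀)
    (hρs : Real.sqrt (condCorrRatioSq μ X₁ X₂ W₀) ≤ ρs) (hρs0 : 0 ≤ ρs) (hρs1 : ρs < 1) :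
    1 - corrRatioSq μ X₁ W₀ ≤
      min ((1 - (corr μ X₁ X₂)^2) / (1 - ρs^2)) 1 :=
  conditional_correlation_bound_general (m := m) (mβ := mβ) μ X₁ X₂ W₀ ρs hX₁ hX₂ hX₂m hW₀ hv₁ hρs
    hρs1
end
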